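/- Let n ≥ 2 and let B_n = ⟨σ₁,…,σ_{n−1} | σ_i σ_{i+1} σ_i = σ_{i+1} σ_i σ_{i+1} for 1 ≤ i ≤ n−2, σ_i σ_j = σ_j σ_i for |i−j| ≥ 2⟩ be the Artin braid group; set C_{i,j} := σ_{j−1}σ_{j−2}⋯σ_{i+1}σ_i²σ_{i+1}⋯σ_{j−2}σ_{j−1} for i < j and C_{i,i} := 1 (so C_{2,2} = 1). Then for every 2 ≤ k ≤ n: ∏_{j=2}^{k} C_{1,j} C_{2,j}⁻¹ = σ₁σ₂⋯σ_{k−2} σ_{k−1}² σ_{k−2}⋯σ₂σ₁, and ∏_{j=2}^{k} C_{1,j}⁻¹ C_{2,j} = (σ₁σ₂⋯σ_{k−2} σ_{k−1}² σ_{k−2}⋯σ₂σ₁)⁻¹, where the products are taken in increasing order of j. -/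
import Mathlib


noncomputable section

/-! ### Ordered products of generators and band generators -/

/-- The ordered product `σ_a · σ_{a+1} · ⋯ · σ_{b-1}`. -/
def ascendProd {G : Type*} [Group G] (σ : ℕ → G) (a b : ℕ) : G :=
  ((List.range (b - a)).map fun t => σ (a + t)).prod

/-- The ordered product `σ_{b-1} · σ_{b-2} · ⋯ · σ_a`. -/
def descendProd {G : Type*} [Group G] (σ : ℕ → G) (a b : ℕ) : G :=
  ((List.range (b - a)).map fun t => σ (b - 1 - t)).prod

/-- The band generator `C_{i,j} = σ_{j-1}σ_{j-2}⋯σ_{i+1}· σ_i² ·σ_{i+1}⋯σ_{j-2}σ_{j-1}`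
for `i < j`, with the convention `C_{i,i} = 1` (and value `1` when `j < i`). -/
def bandGen {G : Type*} [Group G] (σ : ℕ → G) (i j : ℕ) : G :=
  if i < j then descendProd σ (i + 1) j * (σ i) ^ 2 * ascendProd σ (i + 1) j else 1

/-! ### The Artin braid group, via its standard presentation -/

/-- The generator `σ_{i+1}` of the Artin braid group `B_n`, indexed by `i : Fin (n-1)`. -/
abbrev ArtinGen (n : ℕ) : Type := Fin (n - 1)

/-- The free-group word corresponding to the Artin generator `σ_i` (`1 ≤ i ≤ n-1`). -/
def artinF (n : ℕ) (i : ℕ) : FreeGroup (ArtinGen n) :=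
  if h : 1 ≤ i ∧ i ≤ n - 1 then FreeGroup.of ⟨i - 1, by omega⟩ else 1

/-- The Artin relators: `σᵢσ_{i+1}σᵢ = σ_{i+1}σᵢσ_{i+1}` for `1 ≤ i ≤ n-2`, and
`σᵢσⱼ = σⱼσᵢ` for `1 ≤ i,j ≤ n-1` with `|i - j| ≥ 2`. -/
def artinRels (n : ℕ) : Set (FreeGroup (ArtinGen n)) :=
  {w | (∃ i : ℕ, 1 ≤ i ∧ i + 1 ≤ n - 1 ∧
          w = artinF n i * artinF n (i+1) * artinF n i *
              (artinF n (i+1) * artinF n i * artinF n (i+1))⁻¹) ∨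
       (∃ i j : ℕ, 1 ≤ i ∧ i ≤ n - 1 ∧ 1 ≤ j ∧ j ≤ n - 1 ∧ (i + 2 ≤ j ∨ j + 2 ≤ i) ∧
          w = artinF n i * artinF n j * (artinF n j * artinF n i)⁻¹)}

/-- The Artin braid group `B_n`, as the group presented by the Artin presentation. -/
abbrev ArtinBraidGroup (n : ℕ) : Type := PresentedGroup (artinRels n)

/-- The Artin generator `σ_i` of `B_n`, for `1 ≤ i ≤ n-1` (and `1` otherwise). -/
def braidσ (n : ℕ) (i : ℕ) : ArtinBraidGroup n :=
  if h : 1 ≤ i ∧ i ≤ n - 1 then PresentedGroup.of ⟨i - 1, by omega⟩ else 1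


/-! ### Auxiliary lemmas -/

lemma descendProd_succ {G : Type*} [Group G] (σ : ℕ → G) (a b : ℕ) (h : a ≤ b) :
    descendProd σ a (b + 1) = σ b * descendProd σ a b := by
  have hf : ((fun t => σ (b + 1 - 1 - t)) ∘ Nat.succ) = (fun t => σ (b - 1 - t)) := by
    funext t; simp only [Function.comp_apply]; congr 1; omega
  unfold descendProd
  rw [show b + 1 - a = (b - a) + 1 by omega, List.range_succ_eq_map, List.map_cons,
    List.prod_cons, List.map_map, hf]
  norm_num

lemma ascendProd_succ {G : Type*} [Group G] (σ : ℕ → G) (a b : ℕ) (h : a ≤ b) :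
    ascendProd σ a (b + 1) = ascendProd σ a b * σ b := by
  unfold ascendProd
  rw [show b + 1 - a = (b - a) + 1 by omega, List.range_succ, List.map_append,
    List.prod_append]
  simp [show a + (b - a) = b by omega]

lemma ascendProd_cons {G : Type*} [Group G] (σ : ℕ → G) (a b : ℕ) (h : a < b) :
    ascendProd σ a b = σ a * ascendProd σ (a + 1) b := by
  have hf : ((fun t => σ (a + t)) ∘ Nat.succ) = (fun t => σ (a + 1 + t)) := by
    funext t; simp only [Function.comp_apply]; congr 1; omega
  unfold ascendProd
  rw [show b - a = (b - (a+1)) + 1 by omega, List.range_succ_eq_map, List.map_cons,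
    List.prod_cons, List.map_map, hf]
  norm_num

lemma descendProd_peel {G : Type*} [Group G] (σ : ℕ → G) (a b : ℕ) (h : a < b) :
    descendProd σ a b = descendProd σ (a + 1) b * σ a := by
  unfold descendProd
  rw [show b - a = (b - (a+1)) + 1 by omega, List.range_succ, List.map_append,
    List.prod_append]
  congr 1
  simp
  congr 1
  omega

section Core
variable {G : Type*} [Group G] {σ : ℕ → G} {N : ℕ}
  (hbr : ∀ m, 1 ≤ m → m + 1 ≤ N → σ m * σ (m+1) * σ m = σ (m+1) * σ m * σ (m+1))
  (hcm : ∀ i j, i + 2 ≤ j → Commute (σ i) (σ j))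

include hcm in
lemma commute_descendProd (j a b : ℕ) (h : b + 1 ≤ j) :
    Commute (σ j) (descendProd σ a b) := by
  unfold descendProd
  apply Commute.list_prod_right
  intro x hx
  simp only [List.mem_map, List.mem_range] at hx
  obtain ⟨t, ht, rfl⟩ := hx
  exact (hcm (b - 1 - t) j (by omega)).symm

include hcm in
lemma commute_ascendProd (j a b : ℕ) (h : b + 1 ≤ j) :
    Commute (σ j) (ascendProd σ a b) := by
  unfold ascendProd
  apply Commute.list_prod_right
  intro x hx
  simp only [List.mem_map, List.mem_range] at hx
  obtain ⟨t, ht, rfl⟩ := hx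
  exact (hcm (a + t) j (by omega)).symm

lemma conj_sandwich {g d x : G} (h : Commute g d) :
    g * (d⁻¹ * x * d) * g⁻¹ = d⁻¹ * (g * x * g⁻¹) * d := by
  have h1 : g * d⁻¹ = d⁻¹ * g := h.inv_right.eq
  have h2 : d * g⁻¹ = g⁻¹ * d := (h.inv_left.eq).symm
  calc g * (d⁻¹ * x * d) * g⁻¹ = (g * d⁻¹) * x * (d * g⁻¹) := by group
    _ = (d⁻¹ * g) * x * (g⁻¹ * d) := by rw [h1, h2]
    _ = d⁻¹ * (g * x * g⁻¹) * d := by group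

lemma conj_sandwich' {g a x : G} (h : Commute g a) :
    g⁻¹ * (a * x * a⁻¹) * g = a * (g⁻¹ * x * g) * a⁻¹ := by
  have := conj_sandwich (g := g⁻¹) (d := a⁻¹) (x := x) h.inv_left.inv_right
  simpa using this

include hbr in
lemma key1 (m : ℕ) (h1 : 1 ≤ m) (h2 : m + 1 ≤ N) :
    σ (m+1) * σ m ^ 2 * (σ (m+1))⁻¹ = (σ m)⁻¹ * σ (m+1) ^ 2 * σ m := by
  have h := hbr m h1 h2
  have key : σ m * (σ (m+1) * (σ m * σ m) * (σ (m+1))⁻¹) * σ (m+1)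
      = σ m * ((σ m)⁻¹ * (σ (m+1) * σ (m+1)) * σ m) * σ (m+1) := by
    calc σ m * (σ (m+1) * (σ m * σ m) * (σ (m+1))⁻¹) * σ (m+1)
        = (σ m * σ (m+1) * σ m) * σ m := by group
      _ = (σ (m+1) * σ m * σ (m+1)) * σ m := by rw [h]
      _ = σ (m+1) * (σ m * σ (m+1) * σ m) := by group
      _ = σ (m+1) * (σ (m+1) * σ m * σ (m+1)) := by rw [h]
      _ = σ m * ((σ m)⁻¹ * (σ (m+1) * σ (m+1)) * σ m) * σ (m+1) := by group
  rw [pow_two, pow_two]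
  exact mul_left_cancel (mul_right_cancel key)

include hbr in
lemma key2 (m : ℕ) (h1 : 1 ≤ m) (h2 : m + 1 ≤ N) :
    (σ (m+1))⁻¹ * (σ m ^ 2)⁻¹ * σ (m+1) = σ m * (σ (m+1) ^ 2)⁻¹ * (σ m)⁻¹ := by
  have h := hbr m h1 h2
  have key : σ (m+1) * ((σ (m+1))⁻¹ * (σ m * σ m) * σ (m+1)) * (σ m)⁻¹
      = σ (m+1) * (σ m * (σ (m+1) * σ (m+1)) * (σ m)⁻¹) * (σ m)⁻¹ := by
    calc σ (m+1) * ((σ (m+1))⁻¹ * (σ m * σ m) * σ (m+1)) * (σ m)⁻¹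
        = σ m * (σ m * σ (m+1) * σ m) * (σ m)⁻¹ * (σ m)⁻¹ := by group
      _ = σ m * (σ (m+1) * σ m * σ (m+1)) * (σ m)⁻¹ * (σ m)⁻¹ := by rw [h]
      _ = (σ m * σ (m+1) * σ m) * σ (m+1) * (σ m)⁻¹ * (σ m)⁻¹ := by group
      _ = (σ (m+1) * σ m * σ (m+1)) * σ (m+1) * (σ m)⁻¹ * (σ m)⁻¹ := by rw [h]
      _ = σ (m+1) * (σ m * (σ (m+1) * σ (m+1)) * (σ m)⁻¹) * (σ m)⁻¹ := by group
  have key' : (σ (m+1))⁻¹ * (σ m * σ m) * σ (m+1)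
      = σ m * (σ (m+1) * σ (m+1)) * (σ m)⁻¹ :=
    mul_left_cancel (mul_right_cancel key)
  rw [pow_two, pow_two]
  calc (σ (m+1))⁻¹ * (σ m * σ m)⁻¹ * σ (m+1)
      = ((σ (m+1))⁻¹ * (σ m * σ m) * σ (m+1))⁻¹ := by group
    _ = (σ m * (σ (m+1) * σ (m+1)) * (σ m)⁻¹)⁻¹ := by rw [key']
    _ = σ m * (σ (m+1) * σ (m+1))⁻¹ * (σ m)⁻¹ := by group

include hbr hcm in
lemma Qlem : ∀ m, 1 ≤ m → m ≤ N →
    descendProd σ 2 (m+1) * σ 1 ^ 2 * (descendProd σ 2 (m+1))⁻¹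
      = (descendProd σ 1 m)⁻¹ * σ m ^ 2 * descendProd σ 1 m := by
  intro m hm
  induction m, hm using Nat.le_induction with
  | base => intro _; simp [descendProd]
  | succ m hm ih =>
    intro hN
    have ih' := ih (by omega)
    rw [descendProd_succ σ 2 (m+1) (by omega), descendProd_succ σ 1 m (by omega)]
    have hc : Commute (σ (m+1)) (descendProd σ 1 m) :=
      commute_descendProd hcm (m+1) 1 m (by omega)
    calc σ (m+1) * descendProd σ 2 (m+1) * σ 1 ^ 2 * (σ (m+1) * descendProd σ 2 (m+1))⁻¹
        = σ (m+1) * (descendProd σ 2 (m+1) * σ 1 ^ 2 * (descendProd σ 2 (m+1))⁻¹)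
            * (σ (m+1))⁻¹ := by group
      _ = σ (m+1) * ((descendProd σ 1 m)⁻¹ * σ m ^ 2 * descendProd σ 1 m)
            * (σ (m+1))⁻¹ := by rw [ih']
      _ = (descendProd σ 1 m)⁻¹ * (σ (m+1) * σ m ^ 2 * (σ (m+1))⁻¹)
            * descendProd σ 1 m := conj_sandwich hc
      _ = (descendProd σ 1 m)⁻¹ * ((σ m)⁻¹ * σ (m+1) ^ 2 * σ m)
            * descendProd σ 1 m := by rw [key1 hbr m hm hN]
      _ = (σ m * descendProd σ 1 m)⁻¹ * σ (m+1) ^ 2 * (σ m * descendProd σ 1 m) := by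
            group

include hbr hcm in
lemma Qlem' : ∀ m, 1 ≤ m → m ≤ N →
    (ascendProd σ 2 (m+1))⁻¹ * (σ 1 ^ 2)⁻¹ * ascendProd σ 2 (m+1)
      = ascendProd σ 1 m * (σ m ^ 2)⁻¹ * (ascendProd σ 1 m)⁻¹ := by
  intro m hm
  induction m, hm using Nat.le_induction with
  | base => intro _; simp [ascendProd]
  | succ m hm ih =>
    intro hN
    have ih' := ih (by omega)
    rw [ascendProd_succ σ 2 (m+1) (by omega), ascendProd_succ σ 1 m (by omega)]
    have hc : Commute (σ (m+1)) (ascendProd σ 1 m) :=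
      commute_ascendProd hcm (m+1) 1 m (by omega)
    calc (ascendProd σ 2 (m+1) * σ (m+1))⁻¹ * (σ 1 ^ 2)⁻¹ * (ascendProd σ 2 (m+1) * σ (m+1))
        = (σ (m+1))⁻¹ * ((ascendProd σ 2 (m+1))⁻¹ * (σ 1 ^ 2)⁻¹ * ascendProd σ 2 (m+1))
            * σ (m+1) := by group
      _ = (σ (m+1))⁻¹ * (ascendProd σ 1 m * (σ m ^ 2)⁻¹ * (ascendProd σ 1 m)⁻¹)
            * σ (m+1) := by rw [ih']
      _ = ascendProd σ 1 m * ((σ (m+1))⁻¹ * (σ m ^ 2)⁻¹ * σ (m+1))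
            * (ascendProd σ 1 m)⁻¹ := conj_sandwich' hc
      _ = ascendProd σ 1 m * (σ m * (σ (m+1) ^ 2)⁻¹ * (σ m)⁻¹)
            * (ascendProd σ 1 m)⁻¹ := by rw [key2 hbr m hm hN]
      _ = (ascendProd σ 1 m * σ m) * (σ (m+1) ^ 2)⁻¹ * (ascendProd σ 1 m * σ m)⁻¹ := by
            group

end Core

section Band
variable {G : Type*} [Group G] {σ : ℕ → G} {N : ℕ}
  (hbr : ∀ m, 1 ≤ m → m + 1 ≤ N → σ m * σ (m+1) * σ m = σ (m+1) * σ m * σ (m+1))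
  (hcm : ∀ i j, i + 2 ≤ j → Commute (σ i) (σ j))

lemma band1 (j : ℕ) (h2 : 2 ≤ j) :
    bandGen σ 1 j * (bandGen σ 2 j)⁻¹
      = descendProd σ 2 j * σ 1 ^ 2 * (descendProd σ 2 j)⁻¹ := by
  by_cases hj : j = 2
  · subst hj
    simp [bandGen, descendProd, ascendProd]
  · have h3 : 3 ≤ j := by omega
    unfold bandGen
    rw [if_pos (by omega : 1 < j), if_pos (by omega : 2 < j)]
    rw [show (1:ℕ) + 1 = 2 from rfl, show (2:ℕ) + 1 = 3 from rfl]
    rw [ascendProd_cons σ 2 j (by omega), descendProd_peel σ 2 j (by omega)]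
    rw [show (2:ℕ) + 1 = 3 from rfl]
    group

lemma band2 (j : ℕ) (h2 : 2 ≤ j) :
    (bandGen σ 1 j)⁻¹ * bandGen σ 2 j
      = (ascendProd σ 2 j)⁻¹ * (σ 1 ^ 2)⁻¹ * ascendProd σ 2 j := by
  by_cases hj : j = 2
  · subst hj
    simp [bandGen, descendProd, ascendProd]
  · have h3 : 3 ≤ j := by omega
    unfold bandGen
    rw [if_pos (by omega : 1 < j), if_pos (by omega : 2 < j)]
    rw [show (1:ℕ) + 1 = 2 from rfl, show (2:ℕ) + 1 = 3 from rfl]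
    rw [ascendProd_cons σ 2 j (by omega), descendProd_peel σ 2 j (by omega)]
    rw [show (2:ℕ) + 1 = 3 from rfl]
    group

include hbr hcm in
lemma main1 : ∀ m, 1 ≤ m → m ≤ N →
    ((List.range m).map fun t =>
        bandGen σ 1 (2 + t) * (bandGen σ 2 (2 + t))⁻¹).prod
      = ascendProd σ 1 m * σ m ^ 2 * descendProd σ 1 m := by
  intro m hm
  induction m, hm using Nat.le_induction with
  | base =>
    intro _
    rw [show List.range 1 = [0] from rfl, List.map_singleton, List.prod_singleton]
    rw [band1 2 le_rfl]
    simp [descendProd, ascendProd]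
  | succ m hm ih =>
    intro hN
    have ih' := ih (by omega)
    rw [List.range_succ, List.map_append, List.prod_append, List.map_singleton,
      List.prod_singleton, ih', band1 (2 + m) (by omega),
      show 2 + m = (m + 1) + 1 by omega,
      Qlem hbr hcm (m+1) (by omega) hN,
      descendProd_succ σ 1 m (by omega), ascendProd_succ σ 1 m (by omega)]
    group

include hbr hcm in
lemma main2 : ∀ m, 1 ≤ m → m ≤ N →
    ((List.range m).map fun t =>
        (bandGen σ 1 (2 + t))⁻¹ * bandGen σ 2 (2 + t)).prod
      = (ascendProd σ 1 m * σ m ^ 2 * descendProd σ 1 m)⁻¹ := by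
  intro m hm
  induction m, hm using Nat.le_induction with
  | base =>
    intro _
    rw [show List.range 1 = [0] from rfl, List.map_singleton, List.prod_singleton]
    rw [band2 2 le_rfl]
    simp [descendProd, ascendProd]
  | succ m hm ih =>
    intro hN
    have ih' := ih (by omega)
    rw [List.range_succ, List.map_append, List.prod_append, List.map_singleton,
      List.prod_singleton, ih', band2 (2 + m) (by omega),
      show 2 + m = (m + 1) + 1 by omega,
      Qlem' hbr hcm (m+1) (by omega) hN,
      descendProd_succ σ 1 m (by omega), ascendProd_succ σ 1 m (by omega)]
    group

end Band

lemma braidσ_eq (n i : ℕ) : braidσ n i = PresentedGroup.mk (artinRels n) (artinF n i) := by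
  unfold braidσ artinF
  split
  · rfl
  · rw [map_one]

lemma mk_rel_eq_one {n : ℕ} {w : FreeGroup (ArtinGen n)} (hw : w ∈ artinRels n) :
    PresentedGroup.mk (artinRels n) w = 1 :=
  (QuotientGroup.eq_one_iff w).mpr (Subgroup.subset_normalClosure hw)

lemma braid_hbr (n : ℕ) : ∀ m, 1 ≤ m → m + 1 ≤ n - 1 →
    braidσ n m * braidσ n (m+1) * braidσ n m
      = braidσ n (m+1) * braidσ n m * braidσ n (m+1) := by
  intro m h1 h2
  have hw : artinF n m * artinF n (m+1) * artinF n m *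
      (artinF n (m+1) * artinF n m * artinF n (m+1))⁻¹ ∈ artinRels n :=
    Or.inl ⟨m, h1, h2, rfl⟩
  have h := mk_rel_eq_one hw
  simp only [map_mul, map_inv] at h
  rw [braidσ_eq n m, braidσ_eq n (m+1)]
  exact mul_inv_eq_one.mp h

lemma braid_hcm (n : ℕ) : ∀ i j, i + 2 ≤ j →
    Commute (braidσ n i) (braidσ n j) := by
  intro i j hij
  by_cases hr : 1 ≤ i ∧ j ≤ n - 1
  · have hw : artinF n i * artinF n j * (artinF n j * artinF n i)⁻¹ ∈ artinRels n :=
      Or.inr ⟨i, j, hr.1, by omega, by omega, hr.2, Or.inl hij, rfl⟩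
    have h := mk_rel_eq_one hw
    simp only [map_mul, map_inv] at h
    rw [Commute, SemiconjBy, braidσ_eq n i, braidσ_eq n j]
    exact mul_inv_eq_one.mp h
  · push_neg at hr
    by_cases hi : 1 ≤ i
    · have hj : ¬ (1 ≤ j ∧ j ≤ n - 1) := by
        intro hc; exact absurd (hr hi) (not_lt.mpr hc.2)
      have : braidσ n j = 1 := dif_neg hj
      rw [this]
      exact Commute.one_right _
    · have : braidσ n i = 1 := dif_neg (by omega)
      rw [this]
      exact Commute.one_left _

/-- **Remark 2.2 (band generator product identities).**  In the Artin braid group `B_n`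
(`n ≥ 2`), with `C_{i,j} := σ_{j-1}⋯σ_{i+1}σ_i²σ_{i+1}⋯σ_{j-1}` (`C_{i,i} := 1`), for every
`2 ≤ k ≤ n` one has
`∏_{j=2}^{k} C_{1,j}C_{2,j}⁻¹ = σ₁σ₂⋯σ_{k-2}σ_{k-1}²σ_{k-2}⋯σ₂σ₁` and
`∏_{j=2}^{k} C_{1,j}⁻¹C_{2,j} = (σ₁σ₂⋯σ_{k-2}σ_{k-1}²σ_{k-2}⋯σ₂σ₁)⁻¹`,
the products being taken in increasing order of `j`. -/
theorem band_generator_prod_identities (n : ℕ) (hn : 2 ≤ n) (k : ℕ) (hk1 : 2 ≤ k)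
    (hk2 : k ≤ n) :
    (((List.range (k - 1)).map fun t =>
        bandGen (braidσ n) 1 (2 + t) * (bandGen (braidσ n) 2 (2 + t))⁻¹).prod =
      ascendProd (braidσ n) 1 (k - 1) * (braidσ n (k - 1)) ^ 2 *
        descendProd (braidσ n) 1 (k - 1)) ∧
    (((List.range (k - 1)).map fun t =>
        (bandGen (braidσ n) 1 (2 + t))⁻¹ * bandGen (braidσ n) 2 (2 + t)).prod =
      (ascendProd (braidσ n) 1 (k - 1) * (braidσ n (k - 1)) ^ 2 *
        descendProd (braidσ n) 1 (k - 1))⁻¹) := by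
  constructor
  · exact main1 (braid_hbr n) (braid_hcm n) (k - 1) (by omega) (by omega)
  · exact main2 (braid_hbr n) (braid_hcm n) (k - 1) (by omega) (by omega)
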